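/- Let Γ act isometrically on a metric space (X,d) and let D_Γ(x,x') = inf_{γ∈Γ}(|γ| + d(γx,x')). Then the warped metric d_Γ equals D_Γ. -/

import Mathlib

/-!
Taking a chain with a single step shows `d_Γ ≤ D_Γ`. Conversely, `D_Γ` satisfies the triangle
inequality: word length is subadditive, and since `γ'` is an isometry,
`d(γ'γx, z) ≤ d(γx, y) + d(γ'y, z)`. Each step of a chain dominates `D_Γ` of its endpoints, so
every chain sum dominates `D_Γ` of the endpoints of the chain.
-/

open scoped BigOperators

noncomputable def wordLength {G : Type*} [Group G] (S : Set G) (g : G) : ℕ :=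
  sInf {n : ℕ | ∃ f : Fin n → G, (∀ i, f i ∈ S ∨ (f i)⁻¹ ∈ S) ∧ (List.ofFn f).prod = g}

def chainSums {G : Type*} [Group G] {X : Type*} (S : Set G) (act : G → X → X)
    (d : X → X → ℝ) (x x' : X) : Set ℝ :=
  {c | ∃ (N : ℕ) (xs : Fin (N + 1) → X) (γs : Fin N → G),
    xs 0 = x ∧ xs (Fin.last N) = x' ∧
    c = ∑ i : Fin N, ((wordLength S (γs i) : ℝ) + d (act (γs i) (xs i.castSucc)) (xs i.succ))}

noncomputable def warpDist {G : Type*} [Group G] {X : Type*} (S : Set G) (act : G → X → X)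
    (d : X → X → ℝ) (x x' : X) : ℝ :=
  sInf (chainSums S act d x x')

noncomputable def DGamma {G : Type*} [Group G] {X : Type*} (S : Set G) (act : G → X → X)
    (d : X → X → ℝ) (x x' : X) : ℝ :=
  sInf {c : ℝ | ∃ γ : G, c = (wordLength S γ : ℝ) + d (act γ x) x'}

section WordLength

variable {G : Type*} [Group G] (S : Set G)

lemma wordLength_prod_le_length (l : List G) (hl : ∀ y ∈ l, y ∈ S ∨ y⁻¹ ∈ S) :
    wordLength S l.prod ≤ l.length :=
  Nat.sInf_le ⟨l.get, fun i => hl _ (l.get_mem i), by simp [List.ofFn_get]⟩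

lemma wordLength_one : wordLength S 1 = 0 :=
  Nat.le_zero.mp (by simpa using wordLength_prod_le_length S [] (by simp))

lemma exists_word_of_mem_closure {g : G} (hg : g ∈ Subgroup.closure S) :
    ∃ f : Fin (wordLength S g) → G, (∀ i, f i ∈ S ∨ (f i)⁻¹ ∈ S) ∧ (List.ofFn f).prod = g := by
  rw [← Subgroup.mem_toSubmonoid, Subgroup.closure_toSubmonoid] at hg
  obtain ⟨l, hl, rfl⟩ := Submonoid.exists_list_of_mem_closure hg
  refine Nat.sInf_mem (s := {n | ∃ f : Fin n → G, (∀ i, f i ∈ S ∨ (f i)⁻¹ ∈ S) ∧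
    (List.ofFn f).prod = l.prod}) ?_
  refine ⟨l.length, l.get, fun i => ?_, by simp [List.ofFn_get]⟩
  simpa [or_comm] using hl _ (l.get_mem i)

lemma wordLength_mul_le {g h : G} (hg : g ∈ Subgroup.closure S) (hh : h ∈ Subgroup.closure S) :
    wordLength S (g * h) ≤ wordLength S g + wordLength S h := by
  obtain ⟨f, hf, hfg⟩ := exists_word_of_mem_closure S hg
  obtain ⟨f', hf', hf'h⟩ := exists_word_of_mem_closure S hh
  simpa [hfg, hf'h] using wordLength_prod_le_length S (List.ofFn f ++ List.ofFn f') (by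
    simp only [List.mem_append, List.mem_ofFn]
    rintro _ (⟨i, rfl⟩ | ⟨i, rfl⟩)
    exacts [hf i, hf' i])

end WordLength

lemma le_sum_chain_of_triangle {X : Type*} (f : X → X → ℝ) (hself : ∀ x, f x x ≤ 0)
    (htri : ∀ x y z, f x z ≤ f x y + f y z) :
    ∀ (N : ℕ) (xs : Fin (N + 1) → X),
      f (xs 0) (xs (Fin.last N)) ≤ ∑ i : Fin N, f (xs i.castSucc) (xs i.succ) := by
  intro N
  induction N with
  | zero => intro xs; simpa using hself (xs 0)
  | succ N ih =>
    intro xs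
    have hpath := ih (fun i => xs i.succ)
    simp only [Fin.succ_last] at hpath
    rw [Fin.sum_univ_succ]
    calc f (xs 0) (xs (Fin.last (N + 1)))
        ≤ f (xs 0) (xs 1) + f (xs 1) (xs (Fin.last (N + 1))) := htri _ _ _
      _ ≤ _ := by simpa using hpath

section DGamma

variable {X : Type*} [PseudoMetricSpace X] {G : Type*} [Group G] (S : Set G) (act : G → X → X)

lemma DGamma_eq_iInf (x x' : X) :
    DGamma S act dist x x' = ⨅ γ : G, ((wordLength S γ : ℝ) + dist (act γ x) x') := by
  simp only [DGamma, iInf, Set.range, eq_comm]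

lemma bddBelow_range_wordLength_add_dist (x x' : X) :
    BddBelow (Set.range fun γ : G => (wordLength S γ : ℝ) + dist (act γ x) x') :=
  ⟨0, by rintro _ ⟨γ, rfl⟩; positivity⟩

lemma DGamma_le (γ : G) (x x' : X) :
    DGamma S act dist x x' ≤ wordLength S γ + dist (act γ x) x' := by
  rw [DGamma_eq_iInf]
  exact ciInf_le (bddBelow_range_wordLength_add_dist S act x x') γ

lemma DGamma_self_le (hact1 : ∀ x, act 1 x = x) (x : X) : DGamma S act dist x x ≤ 0 := by
  simpa [wordLength_one, hact1] using DGamma_le S act 1 x x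

lemma DGamma_triangle (hSgen : Subgroup.closure S = ⊤)
    (hactmul : ∀ g h x, act (g * h) x = act g (act h x))
    (hiso : ∀ (γ : G) (x y : X), dist (act γ x) (act γ y) = dist x y) (x y z : X) :
    DGamma S act dist x z ≤ DGamma S act dist x y + DGamma S act dist y z := by
  rw [DGamma_eq_iInf S act x y, DGamma_eq_iInf S act y z]
  refine le_ciInf_add_ciInf fun γ γ' => (DGamma_le S act (γ' * γ) x z).trans ?_
  have hlength : (wordLength S (γ' * γ) : ℝ) ≤ wordLength S γ' + wordLength S γ := by
    exact_mod_cast wordLength_mul_le S (hSgen ▸ Subgroup.mem_top γ') (hSgen ▸ Subgroup.mem_top γ)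
  have hdist : dist (act (γ' * γ) x) z ≤ dist (act γ x) y + dist (act γ' y) z :=
    calc dist (act (γ' * γ) x) z ≤ dist (act (γ' * γ) x) (act γ' y) + dist (act γ' y) z :=
          dist_triangle _ _ _
      _ = dist (act γ x) y + dist (act γ' y) z := by rw [hactmul, hiso]
  linarith

end DGamma

theorem warped_metric_eq_one_step_of_isometric_general {X : Type*} [MetricSpace X] {G : Type*} [Group G]
    (S : Set G) (hSgen : Subgroup.closure S = ⊤)
    (act : G → X → X)
    (hact1 : ∀ x, act 1 x = x) (hactmul : ∀ g h x, act (g * h) x = act g (act h x))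
    (hiso : ∀ (γ : G) (x y : X), dist (act γ x) (act γ y) = dist x y) :
    ∀ x x' : X, warpDist S act dist x x' = DGamma S act dist x x' := by
  intro x x'
  have hbdd : BddBelow (chainSums S act dist x x') := by
    refine ⟨0, ?_⟩
    rintro _ ⟨N, xs, γs, -, -, rfl⟩
    exact Finset.sum_nonneg fun i _ => by positivity
  have hone_step (γ : G) : (wordLength S γ : ℝ) + dist (act γ x) x' ∈ chainSums S act dist x x' :=
    ⟨1, ![x, x'], ![γ], rfl, rfl, by simp⟩
  apply le_antisymm
  · rw [DGamma_eq_iInf]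
    exact le_ciInf fun γ => csInf_le hbdd (hone_step γ)
  · refine le_csInf ⟨_, hone_step 1⟩ ?_
    rintro _ ⟨N, xs, γs, rfl, rfl, rfl⟩
    calc DGamma S act dist (xs 0) (xs (Fin.last N))
        ≤ ∑ i : Fin N, DGamma S act dist (xs i.castSucc) (xs i.succ) :=
          le_sum_chain_of_triangle _ (DGamma_self_le S act hact1)
            (DGamma_triangle S act hSgen hactmul hiso) N xs
      _ ≤ _ := Finset.sum_le_sum fun i _ => DGamma_le S act (γs i) _ _

/-- for an isometric action, the warped metric equals `D_Γ`. -/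
theorem warped_metric_eq_one_step_of_isometric {X : Type*} [MetricSpace X] {G : Type*} [Group G]
    (S : Set G) (hSfin : S.Finite) (hSgen : Subgroup.closure S = ⊤)
    (act : G → X → X)
    (hact1 : ∀ x, act 1 x = x) (hactmul : ∀ g h x, act (g * h) x = act g (act h x))
    (hiso : ∀ (γ : G) (x y : X), dist (act γ x) (act γ y) = dist x y) :
    ∀ x x' : X, warpDist S act dist x x' = DGamma S act dist x x' :=
  warped_metric_eq_one_step_of_isometric_general S hSgen act hact1 hactmul hiso
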